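/- arXiv:0808.1813 — 2 statements merged into one kernel-verified Lean document; each statement's English description precedes it below -/
import Mathlib

section
/- Let Δ be a simplicial complex on vertex set V such that every face F ∈ Δ satisfies |F| ≤ |V| − 2. Then any shelling order of the facets of Δ is also a weak shelling order. -/
/-!
Let `i < j` with `F i ∪ F j = V`. Extend `F i ∩ F j` to a maximal face `H` of
`⟨F j⟩ ∩ ⟨F 0, …, F (j-1)⟩`; it lies in some earlier facet `F k`. If `k = i`, then
`H = F i ∩ F j`, so shellability forces `|F i ∩ F j| = |F j| - 1`. But inclusion–exclusion
with `|F i| ≤ |V| - 2` gives `|F i ∩ F j| ≤ |F j| - 2`, so `k ≠ i` is the required index.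
-/

open Finset

/-- `Δ` is a simplicial complex on the vertex set `V`: every face is a subset
of `V` and the family is closed under taking subsets. -/
def IsComplex {α : Type*} (V : Finset α) (Δ : Set (Finset α)) : Prop :=
  (∀ F ∈ Δ, F ⊆ V) ∧ ∀ F ∈ Δ, ∀ G ⊆ F, G ∈ Δ

/-- `F` is a facet (maximal face) of `Δ`. -/
def IsFacet {α : Type*} (Δ : Set (Finset α)) (F : Finset α) : Prop :=
  F ∈ Δ ∧ ∀ G ∈ Δ, F ⊆ G → F = G

/-- `M` is a minimal non-face of the complex `Δ` on vertex set `V`. -/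
def IsMinNonFace {α : Type*} (V : Finset α) (Δ : Set (Finset α)) (M : Finset α) : Prop :=
  M ⊆ V ∧ M ∉ Δ ∧ ∀ N ⊂ M, N ∈ Δ

/-- The Alexander dual `Δ^∨ = {F ⊆ V : V \ F ∉ Δ}`. -/
def AlexanderDual {α : Type*} [DecidableEq α] (V : Finset α) (Δ : Set (Finset α)) :
    Set (Finset α) :=
  {F | F ⊆ V ∧ V \ F ∉ Δ}

/-- `G` is a face of the intersection complex `⟨F j⟩ ∩ ⟨F 0, …, F (j-1)⟩`. -/
def InInter {α : Type*} {r : ℕ} (F : Fin r → Finset α) (j : Fin r) (G : Finset α) : Prop :=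
  G ⊆ F j ∧ ∃ i < j, G ⊆ F i

/-- `F 0, …, F (r-1)` is a shelling order: for every `j ≥ 1` the intersection
complex `⟨F j⟩ ∩ ⟨F 0, …, F (j-1)⟩` is pure of dimension `dim (F j) - 1`, i.e.
every maximal face of it has cardinality `(F j).card - 1`. -/
def IsShellingOrder {α : Type*} {r : ℕ} (F : Fin r → Finset α) : Prop :=
  ∀ j : Fin r, 0 < j.val → ∀ H, InInter F j H →
    (∀ H', InInter F j H' → H ⊆ H' → H = H') → H.card = (F j).card - 1

/-- `M 0, …, M (r-1)` is a strong gcd-order: whenever `i < j` and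
`M i ∩ M j = ∅`, there is `k` with `i < k ≠ j` and `M k ⊆ M i ∪ M j`. -/
def IsStrongGcdOrder {α : Type*} [DecidableEq α] {r : ℕ} (M : Fin r → Finset α) : Prop :=
  ∀ i j : Fin r, i < j → M i ∩ M j = ∅ →
    ∃ k : Fin r, i < k ∧ k ≠ j ∧ M k ⊆ M i ∪ M j

/-- `F 0, …, F (r-1)` is a weak shelling order on vertex set `V`: whenever
`i < j` and `F i ∪ F j = V`, there is `k ≠ i` with `k < j` and
`F i ∩ F j ⊆ F k`. -/
def IsWeakShellingOrder {α : Type*} [DecidableEq α] (V : Finset α) {r : ℕ}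
    (F : Fin r → Finset α) : Prop :=
  ∀ i j : Fin r, i < j → F i ∪ F j = V →
    ∃ k : Fin r, k ≠ i ∧ k < j ∧ F i ∩ F j ⊆ F k

section

variable {α : Type*} {r : ℕ}

theorem InInter.exists_le_maximal {F : Fin r → Finset α} {j : Fin r} {G : Finset α}
    (hG : InInter F j G) : ∃ H, G ⊆ H ∧ Maximal (InInter F j) H :=
  Set.Finite.exists_le_maximal (s := {H | InInter F j H})
    ((F j).powerset.finite_toSet.subset fun _ hH ↦ mem_powerset.mpr hH.1) hG

theorem IsShellingOrder.card_eq_of_maximal {F : Fin r → Finset α} (hF : IsShellingOrder F)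
    {j : Fin r} (hj : 0 < j.val) {H : Finset α} (hH : Maximal (InInter F j) H) :
    H.card = (F j).card - 1 :=
  hF j hj H hH.1 fun _ hH' hle ↦ le_antisymm hle (hH.2 hH' hle)

theorem IsShellingOrder.exists_ne_inter_subset [DecidableEq α] {F : Fin r → Finset α}
    (hF : IsShellingOrder F) {i j : Fin r} (hij : i < j)
    (hcard : (F i ∩ F j).card ≠ (F j).card - 1) :
    ∃ k, k ≠ i ∧ k < j ∧ F i ∩ F j ⊆ F k := by
  obtain ⟨H, hGH, hHmax⟩ :=
    InInter.exists_le_maximal (F := F) ⟨inter_subset_right, i, hij, inter_subset_left⟩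
  obtain ⟨hHj, k, hkj, hHk⟩ := hHmax.1
  refine ⟨k, ?_, hkj, hGH.trans hHk⟩
  rintro rfl
  have hHG : H = F k ∩ F j := (subset_inter hHk hHj).antisymm hGH
  exact hcard (hHG ▸ hF.card_eq_of_maximal (Nat.zero_lt_of_lt hij) hHmax)

theorem card_inter_add_two_le_of_union_eq [DecidableEq α] {V s t : Finset α}
    (hst : s ≠ t) (hunion : s ∪ t = V) (hs : s.card ≤ V.card - 2) (ht : t.card ≤ V.card - 2) :
    (s ∩ t).card + 2 ≤ t.card := by
  have hincl := card_union_add_card_inter s t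
  rw [hunion] at hincl
  by_cases hV : 2 ≤ V.card
  · omega
  · have hs0 : s = ∅ := card_eq_zero.mp (by omega)
    have ht0 : t = ∅ := card_eq_zero.mp (by omega)
    exact absurd (hs0.trans ht0.symm) hst

end

theorem stmt4_general {α : Type*} [DecidableEq α] (V : Finset α) (Δ : Set (Finset α))
    (hsmall : ∀ G ∈ Δ, G.card ≤ V.card - 2)
    {r : ℕ} (F : Fin r → Finset α)
    (hfacet : ∀ i, IsFacet Δ (F i)) (hinj : Function.Injective F)
    (hshell : IsShellingOrder F) :
    IsWeakShellingOrder V F := by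
  intro i j hij hV
  apply hshell.exists_ne_inter_subset hij
  have := card_inter_add_two_le_of_union_eq (hinj.ne hij.ne) hV
    (hsmall _ (hfacet i).1) (hsmall _ (hfacet j).1)
  omega

/-- If every face of `Δ` has cardinality at most `|V| - 2`, then
any shelling order of the facets of `Δ` is a weak shelling order. -/
theorem stmt4 {α : Type*} [DecidableEq α] (V : Finset α) (Δ : Set (Finset α))
    (hΔ : IsComplex V Δ) (hsmall : ∀ G ∈ Δ, G.card ≤ V.card - 2)
    {r : ℕ} (F : Fin r → Finset α)
    (hfacet : ∀ i, IsFacet Δ (F i)) (hinj : Function.Injective F)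
    (hall : ∀ G, IsFacet Δ G → ∃ i, F i = G)
    (hshell : IsShellingOrder F) :
    IsWeakShellingOrder V F :=
  stmt4_general V Δ hsmall F hfacet hinj hshell
end

section
/- For a flag complex Δ (with no ghost vertices), Δ satisfies the strong gcd-condition if and only if the Alexander dual Δ⁽ᵛ⁾ is shellable. -/
open Finset

/-!
The facets of the Alexander dual are exactly the complements `V \ M` of the minimal non-faces
`M`, and after complementing and reversing the order, the strong gcd-condition on the `M`'s is
literally the weak shelling condition on the complements. A shelling whose facets all miss at
least two vertices is a weak shelling: a maximal face `F k ∩ F j` of size `#(F j) - 1` cannot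
contain `F i ∩ F j` with `F i ∪ F j = V`. Conversely, when the `M`'s are 2-sets, a maximal face
`(V \ M i) ∩ (V \ M j)` has the right size exactly when `M i` and `M j` meet; were they disjoint,
the weak shelling condition would give `k ≠ i` with `M k ∪ M j = M i ∪ M j`, forcing `M k = M i`.
-/

open Function

namespace Finset

variable {α : Type*} [DecidableEq α] {V A B C : Finset α}

lemma sdiff_inj_of_subset (hA : A ⊆ V) (hB : B ⊆ V) : V \ A = V \ B ↔ A = B :=
  ⟨fun h => by rw [← Finset.sdiff_sdiff_eq_self hA, h, Finset.sdiff_sdiff_eq_self hB],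
    congrArg (V \ ·)⟩

lemma sdiff_union_sdiff_eq_self_iff (hA : A ⊆ V) : V \ A ∪ V \ B = V ↔ Disjoint A B := by
  rw [← sdiff_inter_distrib_right, sdiff_eq_self_iff_disjoint, disjoint_comm,
    disjoint_of_le_iff_left_eq_bot (inter_subset_left.trans hA), disjoint_iff_inter_eq_empty]
  rfl

lemma sdiff_inter_sdiff_subset_sdiff_iff (hA : A ⊆ V) (hB : B ⊆ V) (hC : C ⊆ V) :
    V \ A ∩ (V \ B) ⊆ V \ C ↔ C ⊆ A ∪ B := by
  rw [← sdiff_union_distrib, sdiff_subset_sdiff_iff_subset (union_subset hA hB) hC]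

lemma card_union_of_card_eq_two (hA : #A = 2) (hB : #B = 2) (hAB : A ≠ B)
    (hmeet : ¬Disjoint A B) : #(A ∪ B) = 3 := by
  have hpos : 0 < #(A ∩ B) := card_pos.2 (not_disjoint_iff_nonempty_inter.1 hmeet)
  have hlt : #(A ∩ B) < #A := by
    refine card_lt_card (ssubset_of_subset_of_ne inter_subset_left fun h => hAB ?_)
    exact eq_of_subset_of_card_le (inter_eq_left.1 h) (by rw [hA, hB])
  have := card_union_add_card_inter A B
  omega

end Finset

open Finset

section AlexanderDual

variable {α : Type*} [DecidableEq α] {V : Finset α} {Δ : Set (Finset α)}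

lemma isFacet_alexanderDual_iff {G : Finset α} :
    IsFacet (AlexanderDual V Δ) G ↔ G ⊆ V ∧ IsMinNonFace V Δ (V \ G) := by
  constructor
  · rintro ⟨⟨hGV, hGΔ⟩, hmax⟩
    refine ⟨hGV, sdiff_subset, hGΔ, fun N hN => by_contra fun hNΔ => ?_⟩
    have hNV : N ⊆ V := hN.subset.trans sdiff_subset
    have hGN : G ⊆ V \ N := subset_sdiff.2 ⟨hGV, disjoint_sdiff.mono_right hN.subset⟩
    have hdual : V \ N ∈ AlexanderDual V Δ :=
      ⟨sdiff_subset, by rwa [Finset.sdiff_sdiff_eq_self hNV]⟩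
    rw [hmax _ hdual hGN, Finset.sdiff_sdiff_eq_self hNV] at hN
    exact hN.ne rfl
  · rintro ⟨hGV, -, hGΔ, hmin⟩
    refine ⟨⟨hGV, hGΔ⟩, fun G' ⟨hG'V, hG'Δ⟩ hGG' => by_contra fun hne => hG'Δ (hmin _ ?_)⟩
    exact ssubset_of_subset_of_ne (sdiff_subset_sdiff subset_rfl hGG')
      fun h => hne ((sdiff_inj_of_subset hGV hG'V).1 h.symm)

lemma isFacet_alexanderDual_sdiff_iff {M : Finset α} (hM : M ⊆ V) :
    IsFacet (AlexanderDual V Δ) (V \ M) ↔ IsMinNonFace V Δ M := by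
  rw [isFacet_alexanderDual_iff, Finset.sdiff_sdiff_eq_self hM]
  exact and_iff_right sdiff_subset

lemma forall_isFacet_alexanderDual_iff {P : Finset α → Prop} :
    (∀ G, IsFacet (AlexanderDual V Δ) G → P G) ↔ ∀ M, IsMinNonFace V Δ M → P (V \ M) := by
  refine ⟨fun h M hM => h _ ((isFacet_alexanderDual_sdiff_iff hM.1).2 hM), fun h G hG => ?_⟩
  obtain ⟨hGV, hmin⟩ := isFacet_alexanderDual_iff.1 hG
  simpa only [Finset.sdiff_sdiff_eq_self hGV] using h _ hmin

lemma minNonFace_enumeration_iff_dualFacet_enumeration {r : ℕ} {M : Fin r → Finset α}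
    (hMV : ∀ i, M i ⊆ V) :
    (Injective M ∧ (∀ i, IsMinNonFace V Δ (M i)) ∧ ∀ N, IsMinNonFace V Δ N → ∃ i, M i = N) ↔
      (Injective (fun j : Fin r => V \ M j.rev) ∧
        (∀ j : Fin r, IsFacet (AlexanderDual V Δ) (V \ M j.rev)) ∧
        ∀ G, IsFacet (AlexanderDual V Δ) G → ∃ j : Fin r, V \ M j.rev = G) := by
  have hinj : Injective (fun j : Fin r => V \ M j.rev) ↔ Injective M :=
    ⟨fun h a b hab => Fin.rev_injective (h (by simp only [Fin.rev_rev, hab])),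
      fun h a b hab => Fin.rev_injective (h ((sdiff_inj_of_subset (hMV _) (hMV _)).1 hab))⟩
  have hfac :
      (∀ j : Fin r, IsFacet (AlexanderDual V Δ) (V \ M j.rev)) ↔ ∀ i, IsMinNonFace V Δ (M i) :=
    (forall_congr' fun j => isFacet_alexanderDual_sdiff_iff (hMV _)).trans
      (Fin.rev_surjective.forall (p := fun i => IsMinNonFace V Δ (M i))).symm
  have hall : (∀ G, IsFacet (AlexanderDual V Δ) G → ∃ j : Fin r, V \ M j.rev = G) ↔
      ∀ N, IsMinNonFace V Δ N → ∃ i, M i = N := by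
    refine forall_isFacet_alexanderDual_iff.trans (forall₂_congr fun N hN => ?_)
    exact (exists_congr fun j => sdiff_inj_of_subset (hMV _) hN.1).trans
      (Fin.rev_surjective.exists (p := fun i => M i = N)).symm
  rw [hinj, hfac, hall]

end AlexanderDual

lemma exists_maximal_inInter {α : Type*} {r : ℕ} (F : Fin r → Finset α) {j : Fin r} {H : Finset α}
    (hH : InInter F j H) :
    ∃ H', InInter F j H' ∧ H ⊆ H' ∧ ∀ H'', InInter F j H'' → H' ⊆ H'' → H' = H'' := by
  have hfin : {H | InInter F j H}.Finite :=
    (F j).powerset.finite_toSet.subset fun H hH => mem_powerset.2 hH.1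
  obtain ⟨H', hHH', hH', hmax⟩ := hfin.exists_le_maximal hH
  exact ⟨H', hH', hHH', fun H'' hH'' h => h.antisymm (hmax hH'' h)⟩

section Shelling

variable {α : Type*} [DecidableEq α] {r : ℕ}

lemma eq_inter_of_maximal_inInter {F : Fin r → Finset α} {j : Fin r} {H : Finset α}
    (hH : InInter F j H) (hmax : ∀ H', InInter F j H' → H ⊆ H' → H = H') :
    ∃ i < j, H = F i ∩ F j := by
  obtain ⟨hHj, i, hij, hHi⟩ := hH
  exact ⟨i, hij, hmax _ ⟨inter_subset_right, i, hij, inter_subset_left⟩ (subset_inter hHi hHj)⟩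

theorem isWeakShellingOrder_sdiff_rev_iff {V : Finset α} {M : Fin r → Finset α}
    (hMV : ∀ i, M i ⊆ V) :
    IsWeakShellingOrder V (fun j => V \ M j.rev) ↔ IsStrongGcdOrder M := by
  have hunion (i j : Fin r) : V \ M j ∪ V \ M i = V ↔ M i ∩ M j = ∅ := by
    rw [sdiff_union_sdiff_eq_self_iff (hMV j), disjoint_comm, disjoint_iff_inter_eq_empty]
  have hinter (i j k : Fin r) : V \ M j ∩ (V \ M i) ⊆ V \ M k ↔ M k ⊆ M i ∪ M j := by
    rw [sdiff_inter_sdiff_subset_sdiff_iff (hMV j) (hMV i) (hMV k), union_comm]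
  constructor
  · intro hw i j hij hdisj
    obtain ⟨k, hkj, hki, hsub⟩ :=
      hw j.rev i.rev (Fin.rev_lt_rev.2 hij) (by simpa only [Fin.rev_rev, hunion] using hdisj)
    refine ⟨k.rev, Fin.lt_rev_iff.1 hki, fun h => hkj (Fin.rev_eq_iff.1 h), ?_⟩
    simpa only [Fin.rev_rev, hinter] using hsub
  · intro hg j i hji hunion_eq
    obtain ⟨k, hik, hkj, hsub⟩ :=
      hg i.rev j.rev (Fin.rev_lt_rev.2 hji) ((hunion _ _).1 hunion_eq)
    refine ⟨k.rev, fun h => hkj (Fin.rev_eq_iff.1 h), Fin.rev_lt_iff.2 hik, ?_⟩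
    simpa only [Fin.rev_rev, hinter] using hsub

theorem IsShellingOrder.isWeakShellingOrder {V : Finset α} {F : Fin r → Finset α}
    (hs : IsShellingOrder F) (hcard : ∀ i, #(F i) + 2 ≤ #V) : IsWeakShellingOrder V F := by
  intro i j hij hunion
  obtain ⟨H, hH, hsub, hmax⟩ :=
    exists_maximal_inInter F (⟨inter_subset_right, i, hij, inter_subset_left⟩ : InInter F j _)
  obtain ⟨k, hkj, rfl⟩ := eq_inter_of_maximal_inInter hH hmax
  refine ⟨k, ?_, hkj, hsub.trans inter_subset_left⟩
  rintro rfl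
  have hcard_inter := hs j (Nat.lt_of_le_of_lt (Nat.zero_le _) hij) _ hH hmax
  have hcard_union := card_union_add_card_inter (F k) (F j)
  rw [hunion] at hcard_union
  have := hcard k
  omega

theorem IsWeakShellingOrder.isShellingOrder_sdiff {V : Finset α} {N : Fin r → Finset α}
    (hw : IsWeakShellingOrder V (fun i => V \ N i)) (hNV : ∀ i, N i ⊆ V)
    (hN2 : ∀ i, #(N i) = 2) (hinj : Injective N) : IsShellingOrder (fun i => V \ N i) := by
  intro j _ H hH hmax
  obtain ⟨i, hij, rfl⟩ := eq_inter_of_maximal_inInter hH hmax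
  have hmeet : ¬Disjoint (N i) (N j) := by
    intro hdisj
    obtain ⟨k, hki, hkj, hsub⟩ := hw i j hij ((sdiff_union_sdiff_eq_self_iff (hNV i)).2 hdisj)
    have hH : V \ N i ∩ (V \ N j) = V \ N k ∩ (V \ N j) :=
      hmax _ ⟨inter_subset_right, k, hkj, inter_subset_left⟩ (subset_inter hsub inter_subset_right)
    rw [← sdiff_union_distrib, ← sdiff_union_distrib,
      sdiff_inj_of_subset (union_subset (hNV i) (hNV j)) (union_subset (hNV k) (hNV j))] at hH
    have hik : N i ⊆ N k := by
      rw [← union_sdiff_cancel_right hdisj, hH, union_sdiff_right]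
      exact sdiff_subset
    exact hki (hinj (eq_of_subset_of_card_le hik (by rw [hN2, hN2])).symm)
  have h3 := card_union_of_card_eq_two (hN2 i) (hN2 j) (hinj.ne hij.ne) hmeet
  have hij_sub := union_subset (hNV i) (hNV j)
  have hV := card_le_card hij_sub
  show #(V \ N i ∩ (V \ N j)) = #(V \ N j) - 1
  rw [← sdiff_union_distrib, card_sdiff_of_subset hij_sub, card_sdiff_of_subset (hNV j), h3, hN2]
  omega

theorem isStrongGcdOrder_iff_isShellingOrder_sdiff_rev {V : Finset α} {M : Fin r → Finset α}
    (hMV : ∀ i, M i ⊆ V) (hM2 : ∀ i, #(M i) = 2) (hinj : Injective M) :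
    IsStrongGcdOrder M ↔ IsShellingOrder (fun j => V \ M j.rev) := by
  rw [← isWeakShellingOrder_sdiff_rev_iff hMV]
  refine ⟨fun hw => hw.isShellingOrder_sdiff (fun _ => hMV _) (fun _ => hM2 _)
    (hinj.comp Fin.rev_injective), fun hs => hs.isWeakShellingOrder fun j => ?_⟩
  have hle : 2 ≤ #V := hM2 j.rev ▸ card_le_card (hMV j.rev)
  rw [card_sdiff_of_subset (hMV _), hM2]
  omega

end Shelling

theorem stmt18_general {α : Type*} [DecidableEq α] (V : Finset α) (Δ : Set (Finset α))
    (hflag : ∀ N, IsMinNonFace V Δ N → N.card = 2) :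
    (∃ (r : ℕ) (M : Fin r → Finset α),
        Function.Injective M ∧ (∀ i, IsMinNonFace V Δ (M i)) ∧
        (∀ N, IsMinNonFace V Δ N → ∃ i, M i = N) ∧
        IsStrongGcdOrder M) ↔
    (∃ (r : ℕ) (F : Fin r → Finset α),
        Function.Injective F ∧ (∀ i, IsFacet (AlexanderDual V Δ) (F i)) ∧
        (∀ G, IsFacet (AlexanderDual V Δ) G → ∃ i, F i = G) ∧
        IsShellingOrder F) := by
  constructor
  · rintro ⟨r, M, hinj, hmin, hall, hgcd⟩
    have hMV i : M i ⊆ V := (hmin i).1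
    obtain ⟨hinj', hfac, hall'⟩ :=
      (minNonFace_enumeration_iff_dualFacet_enumeration hMV).1 ⟨hinj, hmin, hall⟩
    exact ⟨r, _, hinj', hfac, hall',
      (isStrongGcdOrder_iff_isShellingOrder_sdiff_rev hMV (fun i => hflag _ (hmin i)) hinj).1 hgcd⟩
  · rintro ⟨r, F, hinj, hfac, hall, hshell⟩
    obtain ⟨M, hMV, rfl⟩ : ∃ M : Fin r → Finset α, (∀ i, M i ⊆ V) ∧ F = fun j => V \ M j.rev :=
      ⟨fun j => V \ F j.rev, fun _ => sdiff_subset,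
        funext fun j => by simp only [Fin.rev_rev, Finset.sdiff_sdiff_eq_self (hfac j).1.1]⟩
    obtain ⟨hinj', hmin, hall'⟩ :=
      (minNonFace_enumeration_iff_dualFacet_enumeration hMV).2 ⟨hinj, hfac, hall⟩
    exact ⟨r, M, hinj', hmin, hall',
      (isStrongGcdOrder_iff_isShellingOrder_sdiff_rev hMV (fun i => hflag _ (hmin i))
        hinj').2 hshell⟩

/-- a flag complex satisfies the strong gcd-condition iff its
Alexander dual is shellable. -/
theorem stmt18 {α : Type*} [DecidableEq α] (V : Finset α) (Δ : Set (Finset α))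
    (hΔ : IsComplex V Δ) (hghost : ∀ v ∈ V, ({v} : Finset α) ∈ Δ)
    (hflag : ∀ N, IsMinNonFace V Δ N → N.card = 2) :
    (∃ (r : ℕ) (M : Fin r → Finset α),
        Function.Injective M ∧ (∀ i, IsMinNonFace V Δ (M i)) ∧
        (∀ N, IsMinNonFace V Δ N → ∃ i, M i = N) ∧
        IsStrongGcdOrder M) ↔
    (∃ (r : ℕ) (F : Fin r → Finset α),
        Function.Injective F ∧ (∀ i, IsFacet (AlexanderDual V Δ) (F i)) ∧
        (∀ G, IsFacet (AlexanderDual V Δ) G → ∃ i, F i = G) ∧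
        IsShellingOrder F) :=
  stmt18_general V Δ hflag
end
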